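/- (Realization from arbitrary left-invertible factorizations; core of the proof of Theorem 1.) Let T be a causal operator and suppose that for each 1 ≤ i ≤ ℓ−1 one is given matrices 𝒪_i ∈ ℝ^{d(ℓ−i)×n_i} and 𝒞_i ∈ ℝ^{n_i×di} with H_i = 𝒪_i 𝒞_i, together with a left inverse P_i ∈ ℝ^{di×n_i} satisfying P_i 𝒞_i = I_{di}. Set n_0 = n_ℓ = 0 and define: C_i = the first d rows (first block row) of 𝒪_i for 1 ≤ i ≤ ℓ−1; B_{i−1} = the last d columns (last block column) of 𝒞_i for 1 ≤ i ≤ ℓ−1; A_i = (the first d·i columns of 𝒞_{i+1}) · P_i for 1 ≤ i ≤ ℓ−2; D_i = T_{ii} for all i (the boundary matrices A_0, A_{ℓ−1}, B_{ℓ−1}, C_0 having a zero dimension). Then (A_i, B_i, C_i, D_i) is a recurrent realization of T, i.e., T_{ij} = C_i A_{i−1} ⋯ A_{j+1} B_j for all i > j. -/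
import Mathlib


open Matrix

/-- `stProd n A i j` is the state-transition product `A (i-1) * A (i-2) * ⋯ * A j`
(mapping `ℝ^{n j}` to `ℝ^{n i}`), with the empty product (`i = j`) equal to the identity. -/
noncomputable def stProd (n : ℕ → ℕ) (A : ∀ i : ℕ, Matrix (Fin (n (i + 1))) (Fin (n i)) ℝ) :
    (i j : ℕ) → Matrix (Fin (n i)) (Fin (n j)) ℝ
  | 0, j =>
      if h : (0 : ℕ) = j then
        (1 : Matrix (Fin (n 0)) (Fin (n 0)) ℝ).submatrix id (Fin.cast (congrArg n h.symm))
      else 0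
  | i + 1, j =>
      if h : i + 1 = j then
        (1 : Matrix (Fin (n (i + 1))) (Fin (n (i + 1))) ℝ).submatrix id
          (Fin.cast (congrArg n h.symm))
      else A i * stProd n A i j

/-- `T` is a causal operator: its `d × d` blocks `T i j` vanish above the block diagonal. -/
def IsCausal (d ℓ : ℕ) (T : ℕ → ℕ → Matrix (Fin d) (Fin d) ℝ) : Prop :=
  ∀ i j, i < ℓ → j < ℓ → i < j → T i j = 0

/-- `(A, B, C, D)` with state sizes `n` is a recurrent realization of the causal operator `T`:
`T i i = D i` and `T i j = C i * (A (i-1) * ⋯ * A (j+1)) * B j` for `i > j`. -/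
def IsRealization (d ℓ : ℕ) (T : ℕ → ℕ → Matrix (Fin d) (Fin d) ℝ) (n : ℕ → ℕ)
    (A : ∀ i : ℕ, Matrix (Fin (n (i + 1))) (Fin (n i)) ℝ)
    (B : ∀ i : ℕ, Matrix (Fin (n (i + 1))) (Fin d) ℝ)
    (C : ∀ i : ℕ, Matrix (Fin d) (Fin (n i)) ℝ)
    (D : ℕ → Matrix (Fin d) (Fin d) ℝ) : Prop :=
  (∀ i, i < ℓ → T i i = D i) ∧
  ∀ i j, i < ℓ → j < i → T i j = C i * stProd n A i (j + 1) * B j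

/-- The operator submatrix `H_i = T_{i:,:i-1}`, with rows indexed by block row `i + k`
(`k < ℓ - i`) and columns by block column `j < i`. -/
def Hmat (d ℓ : ℕ) (T : ℕ → ℕ → Matrix (Fin d) (Fin d) ℝ) (i : ℕ) :
    Matrix (Fin (ℓ - i) × Fin d) (Fin i × Fin d) ℝ :=
  fun p q => T (i + (p.1 : ℕ)) (q.1 : ℕ) p.2 q.2

/-- The observability matrix at index `i`, with block rows `C (i+k) * A (i+k-1) * ⋯ * A i`. -/
noncomputable def Obs (d ℓ : ℕ) (n : ℕ → ℕ)
    (A : ∀ i : ℕ, Matrix (Fin (n (i + 1))) (Fin (n i)) ℝ)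
    (C : ∀ i : ℕ, Matrix (Fin d) (Fin (n i)) ℝ) (i : ℕ) :
    Matrix (Fin (ℓ - i) × Fin d) (Fin (n i)) ℝ :=
  fun p s => (C (i + (p.1 : ℕ)) * stProd n A (i + (p.1 : ℕ)) i) p.2 s

/-- The controllability matrix at index `i`, with block columns `A (i-1) * ⋯ * A (j+1) * B j`. -/
noncomputable def Ctrb (d : ℕ) (n : ℕ → ℕ)
    (A : ∀ i : ℕ, Matrix (Fin (n (i + 1))) (Fin (n i)) ℝ)
    (B : ∀ i : ℕ, Matrix (Fin (n (i + 1))) (Fin d) ℝ) (i : ℕ) :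
    Matrix (Fin (n i)) (Fin i × Fin d) ℝ :=
  fun s q => (stProd n A i ((q.1 : ℕ) + 1) * B (q.1 : ℕ)) s q.2

lemma stProd_self (n : ℕ → ℕ) (A : ∀ i : ℕ, Matrix (Fin (n (i + 1))) (Fin (n i)) ℝ)
    (i : ℕ) : stProd n A i i = 1 := by
  cases i with
  | zero =>
    rw [stProd, dif_pos rfl]
    ext a b
    simp [Matrix.one_apply, Fin.ext_iff]
  | succ k =>
    rw [stProd, dif_pos rfl]
    ext a b
    simp [Matrix.one_apply, Fin.ext_iff]

lemma stProd_succ (n : ℕ → ℕ) (A : ∀ i : ℕ, Matrix (Fin (n (i + 1))) (Fin (n i)) ℝ)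
    (i j : ℕ) (h : i + 1 ≠ j) : stProd n A (i + 1) j = A i * stProd n A i j := by
  rw [stProd, dif_neg h]

/-- realization from arbitrary left-invertible factorizations `H_i = 𝒪_i 𝒞_i`
(with `P i * 𝒞_i = I`).  Setting `n' 0 = n' ℓ = 0`, `C' i` = first block row of `𝒪_i`,
`B' (i-1)` = last block column of `𝒞_i`, `A' i` = (first `d·i` columns of `𝒞_{i+1}`) `* P i`,
and `D' i = T i i`, the family `(A', B', C', D')` is a recurrent realization of `T`. -/
theorem realization_from_factorization (d ℓ : ℕ) (hd : 1 ≤ d) (hℓ : 1 ≤ ℓ)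
    (T : ℕ → ℕ → Matrix (Fin d) (Fin d) ℝ) (hT : IsCausal d ℓ T)
    (n : ℕ → ℕ)
    (O : ∀ i : ℕ, Matrix (Fin (ℓ - i) × Fin d) (Fin (n i)) ℝ)
    (Cc : ∀ i : ℕ, Matrix (Fin (n i)) (Fin i × Fin d) ℝ)
    (P : ∀ i : ℕ, Matrix (Fin i × Fin d) (Fin (n i)) ℝ)
    (hfact : ∀ i, 1 ≤ i → i < ℓ → Hmat d ℓ T i = O i * Cc i)
    (hP : ∀ i, 1 ≤ i → i < ℓ → P i * Cc i = 1)
    (n' : ℕ → ℕ)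
    (hn : ∀ i, 1 ≤ i → i < ℓ → n' i = n i)
    (hn0 : n' 0 = 0) (hnl : ∀ i, ℓ ≤ i → n' i = 0)
    (A' : ∀ i : ℕ, Matrix (Fin (n' (i + 1))) (Fin (n' i)) ℝ)
    (B' : ∀ i : ℕ, Matrix (Fin (n' (i + 1))) (Fin d) ℝ)
    (C' : ∀ i : ℕ, Matrix (Fin d) (Fin (n' i)) ℝ)
    (D' : ℕ → Matrix (Fin d) (Fin d) ℝ)
    (hC' : ∀ (i : ℕ) (h1 : 1 ≤ i) (h2 : i < ℓ) (a : Fin d) (s : Fin (n' i)),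
      C' i a s = O i (⟨0, Nat.sub_pos_of_lt h2⟩, a) (Fin.cast (hn i h1 h2) s))
    (hB' : ∀ (i : ℕ) (h2 : i + 1 < ℓ) (s : Fin (n' (i + 1))) (b : Fin d),
      B' i s b =
        Cc (i + 1) (Fin.cast (hn (i + 1) (Nat.succ_le_succ (Nat.zero_le i)) h2) s)
          (Fin.last i, b))
    (hA' : ∀ (i : ℕ) (h1 : 1 ≤ i) (h2 : i + 1 < ℓ) (s : Fin (n' (i + 1))) (t : Fin (n' i)),
      A' i s t = ∑ q : Fin i × Fin d,
        Cc (i + 1) (Fin.cast (hn (i + 1) (Nat.succ_le_succ (Nat.zero_le i)) h2) s)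
            (q.1.castSucc, q.2) *
          P i q (Fin.cast (hn i h1 (Nat.lt_of_succ_lt h2)) t))
    (hD' : ∀ i, i < ℓ → D' i = T i i) :
    IsRealization d ℓ T n' A' B' C' D' := by
  have key : ∀ (j i : ℕ) (hji : j + 1 ≤ i) (hi : i < ℓ) (s : Fin (n' i)) (b : Fin d),
      (stProd n' A' i (j + 1) * B' j) s b
        = Cc i (Fin.cast (hn i (le_trans (Nat.succ_le_succ (Nat.zero_le j)) hji)
            hi) s) (⟨j, hji⟩, b) := by
    intro j i hji
    induction i, hji using Nat.le_induction with
    | base =>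
      intro hi s b
      rw [stProd_self, Matrix.one_mul, hB' j hi s b]
      rfl
    | succ i hji ih =>
      intro hi s b
      have hi' : i < ℓ := Nat.lt_of_succ_lt hi
      have h1i : 1 ≤ i := le_trans (Nat.succ_le_succ (Nat.zero_le j)) hji
      rw [stProd_succ n' A' i (j + 1) (by omega), Matrix.mul_assoc, Matrix.mul_apply]
      have step : ∀ t : Fin (n' i),
          A' i s t * (stProd n' A' i (j + 1) * B' j) t b
            = ∑ q : Fin i × Fin d,
                Cc (i + 1) (Fin.cast (hn (i + 1) (Nat.succ_le_succ (Nat.zero_le i)) hi) s)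
                    (q.1.castSucc, q.2) *
                  (P i q (Fin.cast (hn i h1i hi') t) *
                    Cc i (Fin.cast (hn i h1i hi') t) (⟨j, hji⟩, b)) := by
        intro t
        rw [hA' i h1i hi s t, ih hi' t b, Finset.sum_mul]
        exact Finset.sum_congr rfl fun q _ => by ring
      rw [Finset.sum_congr rfl fun t _ => step t, Finset.sum_comm]
      have inner : ∀ q : Fin i × Fin d,
          (∑ t : Fin (n' i),
              Cc (i + 1) (Fin.cast (hn (i + 1) (Nat.succ_le_succ (Nat.zero_le i)) hi) s)
                  (q.1.castSucc, q.2) *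
                (P i q (Fin.cast (hn i h1i hi') t) *
                  Cc i (Fin.cast (hn i h1i hi') t) (⟨j, hji⟩, b)))
            = Cc (i + 1) (Fin.cast (hn (i + 1) (Nat.succ_le_succ (Nat.zero_le i)) hi) s)
                (q.1.castSucc, q.2) *
                (1 : Matrix (Fin i × Fin d) (Fin i × Fin d) ℝ) q (⟨j, hji⟩, b) := by
        intro q
        rw [← Finset.mul_sum, ← hP i h1i hi', Matrix.mul_apply]
        congr 1
        exact Fintype.sum_equiv (finCongr (hn i h1i hi')) _ _ fun t => rfl
      rw [Finset.sum_congr rfl fun q _ => inner q]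
      simp only [Matrix.one_apply, mul_ite, mul_one, mul_zero]
      rw [Finset.sum_ite_eq' Finset.univ (⟨⟨j, hji⟩, b⟩ : Fin i × Fin d)]
      simp only [Finset.mem_univ, if_true]
      rfl
  constructor
  · intro i hi
    exact (hD' i hi).symm
  · intro i j hi hji
    have h1i : 1 ≤ i := Nat.one_le_iff_ne_zero.mpr (by omega)
    ext a b
    rw [Matrix.mul_assoc, Matrix.mul_apply]
    have step : ∀ s : Fin (n' i),
        C' i a s * (stProd n' A' i (j + 1) * B' j) s b
          = O i (⟨0, Nat.sub_pos_of_lt hi⟩, a) (Fin.cast (hn i h1i hi) s) *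
              Cc i (Fin.cast (hn i h1i hi) s) (⟨j, hji⟩, b) := by
      intro s
      rw [hC' i h1i hi a s, key j i hji hi s b]
    rw [Finset.sum_congr rfl fun s _ => step s]
    have : (∑ s : Fin (n' i),
        O i (⟨0, Nat.sub_pos_of_lt hi⟩, a) (Fin.cast (hn i h1i hi) s) *
          Cc i (Fin.cast (hn i h1i hi) s) (⟨j, hji⟩, b))
        = (O i * Cc i) (⟨0, Nat.sub_pos_of_lt hi⟩, a) (⟨j, hji⟩, b) := by
      rw [Matrix.mul_apply]
      exact Fintype.sum_equiv (finCongr (hn i h1i hi)) _ _ fun s => rfl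
    rw [this, ← hfact i h1i hi]
    show T i j a b = T (i + 0) j a b
    rw [Nat.add_zero]
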